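/- Let M be a compact Hausdorff space with basepoint x₀, fix 0 < ε < 1/6, and let σ : [0,ε] → M be a stick. Then the restriction of the reparametrization map r to [0,1] × Ω^σM is injective and, moreover, is a homeomorphism onto its image r([0,1] × Ω^σM) ⊆ ΩM (where the image carries the subspace topology from ΩM). -/

import Mathlib

/-!
Since `r(s, γ)(ε/2) = γ(sε) = σ(sε)` for a stick loop `γ`, and `σ` embeds the compact interval
`[0, ε]` into the Hausdorff space `M`, the parameter `s` depends continuously on `r(s, γ)`.
Knowing `s`, the loop `γ` is read off `r(s, γ)` on `[ε, 1 - ε]` through an explicit inverse time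
change which is jointly continuous in `(s, u)`, and on the rest of `[0, 1]` it is the stick.
So `r` has a continuous inverse on its image.
-/

open Set

/-- The based loop space of `M` at `x₀`: continuous maps `[0,1] → M` sending both
endpoints to `x₀`, with the compact-open topology. -/
abbrev OmegaLoop (M : Type*) [TopologicalSpace M] (x₀ : M) : Type _ :=
  {γ : C(unitInterval, M) // γ 0 = x₀ ∧ γ 1 = x₀}

/-- The subspace `Ω^σ M` of loops following the stick `σ` on `[0,ε]` and its reverse on
`[1-ε,1]`. -/
abbrev StickOmegaLoop (M : Type*) [TopologicalSpace M] (x₀ : M) (ε : ℝ) (σ : ℝ → M) :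
    Type _ :=
  {γ : OmegaLoop M x₀ // ∀ t : unitInterval,
    ((t : ℝ) ≤ ε → γ.1 t = σ t) ∧ (1 - ε ≤ (t : ℝ) → γ.1 t = σ (1 - (t : ℝ)))}

open Function Topology

/-- For `u ∈ [ε, 1 - ε]` this is `u / (2s)` if `u ≤ s` and `1/2 + (u - s) / (2(1 - s))` if
`s ≤ u`, the time at which `r(s, γ)` passes through `γ(u)`; the cutoffs at `ε/2` keep the
denominators positive, so that it is continuous on all of `ℝ²`. -/
noncomputable def reparamInvTime (ε s u : ℝ) : ℝ :=
  1/2 - max 0 (s - u) / (2 * max s (ε/2)) + max 0 (u - s) / (2 * max (1 - s) (ε/2))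

section reparamInvTime

variable {ε s u : ℝ}

lemma continuous_reparamInvTime (hε : 0 < ε) :
    Continuous fun p : ℝ × ℝ => reparamInvTime ε p.1 p.2 := by
  have hpos : ∀ x : ℝ, 2 * max x (ε/2) ≠ 0 := fun x =>
    (mul_pos two_pos (lt_max_of_lt_right (half_pos hε))).ne'
  unfold reparamInvTime
  fun_prop (disch := exact fun _ => hpos _)

lemma reparamInvTime_of_le (hε : 0 < ε) (hu : ε ≤ u) (h : u ≤ s) :
    reparamInvTime ε s u = u / (2 * s) := by
  have hs : 0 < s := hε.trans_le (hu.trans h)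
  rw [reparamInvTime, max_eq_left (by linarith : u - s ≤ 0), max_eq_right (by linarith : 0 ≤ s - u),
    max_eq_left (by linarith : ε/2 ≤ s), zero_div, add_zero]
  field_simp
  ring

lemma reparamInvTime_of_ge (hε : 0 < ε) (h : s ≤ u) (hu : u ≤ 1 - ε) :
    reparamInvTime ε s u = 1/2 + (u - s) / (2 * (1 - s)) := by
  rw [reparamInvTime, max_eq_left (by linarith : s - u ≤ 0), max_eq_right (by linarith : 0 ≤ u - s),
    max_eq_left (by linarith : ε/2 ≤ 1 - s), zero_div, sub_zero]

end reparamInvTime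

lemma unitInterval.mul_mem_Icc (s : unitInterval) {ε : ℝ} (hε : 0 ≤ ε) :
    (s : ℝ) * ε ∈ Icc 0 ε :=
  ⟨mul_nonneg s.2.1 hε, mul_le_of_le_one_left hε s.2.2⟩

section Reparametrization

variable {M : Type*} [TopologicalSpace M]

/-- `δ = r(s, γ)`, where `IccExtend` plays the role of the clamping `projIcc` in the
definition of `r`. -/
def IsReparamAt (s : unitInterval) (γ δ : C(unitInterval, M)) : Prop :=
  ∀ t : unitInterval,
    ((t : ℝ) ≤ 1/2 → δ t = IccExtend zero_le_one γ (2 * (s : ℝ) * t)) ∧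
    (1/2 ≤ (t : ℝ) → δ t = IccExtend zero_le_one γ (2 * (1 - (s : ℝ)) * t - 1 + 2 * (s : ℝ)))

def IsStickLoop (ε : ℝ) (σ : ℝ → M) (γ : C(unitInterval, M)) : Prop :=
  ∀ t : unitInterval, ((t : ℝ) ≤ ε → γ t = σ t) ∧ (1 - ε ≤ (t : ℝ) → γ t = σ (1 - t))

namespace IsReparamAt

variable {ε : ℝ} {σ : ℝ → M} {s s' : unitInterval} {γ γ' δ : C(unitInterval, M)}

lemma IccExtend_reparamInvTime (hδ : IsReparamAt s γ δ) (hε : 0 < ε) {u : ℝ}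
    (hu : u ∈ Icc ε (1 - ε)) :
    IccExtend zero_le_one δ (reparamInvTime ε s u) = IccExtend zero_le_one γ u := by
  obtain ⟨hεu, hu1⟩ := hu
  rcases le_total u s with h | h
  · have hs : 0 < (s : ℝ) := hε.trans_le (hεu.trans h)
    have hθ_half : u / (2 * s) ≤ 1/2 := by rw [div_le_iff₀ (by positivity)]; linarith
    have hθ_mem : u / (2 * s) ∈ unitInterval :=
      ⟨div_nonneg (by linarith) (by linarith), by linarith⟩
    rw [reparamInvTime_of_le hε hεu h, IccExtend_of_mem _ _ hθ_mem, (hδ _).1 hθ_half]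
    congr 1
    field_simp
  · have hs : 0 < 1 - (s : ℝ) := by linarith
    have hfrac : (u - s) / (2 * (1 - s)) ≤ 1/2 := by rw [div_le_iff₀ (by positivity)]; linarith
    have hfrac' : 0 ≤ (u - s) / (2 * (1 - s)) := div_nonneg (by linarith) (by positivity)
    have hθ_mem : 1/2 + (u - s) / (2 * (1 - s)) ∈ unitInterval := ⟨by linarith, by linarith⟩
    rw [reparamInvTime_of_ge hε h hu1, IccExtend_of_mem _ _ hθ_mem,
      (hδ _).2 (by simpa using hfrac')]
    congr 1
    field_simp
    ring

lemma IccExtend_half (hδ : IsReparamAt s γ δ) (hγ : IsStickLoop ε σ γ) (hε : 0 < ε)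
    (hε1 : ε ≤ 1) : IccExtend zero_le_one δ (ε / 2) = σ (s * ε) := by
  have hsε := unitInterval.mul_mem_Icc s hε.le
  have hmem : ε / 2 ∈ unitInterval := ⟨by positivity, by linarith⟩
  rw [IccExtend_of_mem _ _ hmem, (hδ _).1 (by change ε / 2 ≤ 1 / 2; linarith),
    show 2 * (s : ℝ) * (ε / 2) = s * ε by ring,
    IccExtend_of_mem _ _ ⟨hsε.1, hsε.2.trans hε1⟩]
  exact (hγ _).1 hsε.2

lemma eq_of_isStickLoop (hσ : InjOn σ (Icc 0 ε)) (hε : 0 < ε) (hε1 : ε ≤ 1)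
    (hγ : IsStickLoop ε σ γ) (hγ' : IsStickLoop ε σ γ') (hδ : IsReparamAt s γ δ)
    (hδ' : IsReparamAt s' γ' δ) : s = s' ∧ γ = γ' := by
  obtain rfl : s = s' := Subtype.ext <| mul_right_cancel₀ hε.ne' <|
    hσ (unitInterval.mul_mem_Icc s hε.le) (unitInterval.mul_mem_Icc s' hε.le) <|
      (hδ.IccExtend_half hγ hε hε1).symm.trans (hδ'.IccExtend_half hγ' hε hε1)
  refine ⟨rfl, ContinuousMap.ext fun t => ?_⟩
  by_cases h1 : (t : ℝ) ≤ ε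
  · rw [(hγ t).1 h1, (hγ' t).1 h1]
  by_cases h2 : 1 - ε ≤ (t : ℝ)
  · rw [(hγ t).2 h2, (hγ' t).2 h2]
  have hu : (t : ℝ) ∈ Icc ε (1 - ε) := ⟨(not_le.1 h1).le, (not_le.1 h2).le⟩
  simpa only [IccExtend_val] using
    (hδ.IccExtend_reparamInvTime hε hu).symm.trans (hδ'.IccExtend_reparamInvTime hε hu)

end IsReparamAt

section Continuity

variable {X : Type*} [TopologicalSpace X] {ε : ℝ} {σ : ℝ → M}
  {δ γ : X → C(unitInterval, M)} {s : X → unitInterval}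

lemma continuous_param_of_isReparamAt [T2Space M] (hσc : ContinuousOn σ (Icc 0 ε))
    (hσi : InjOn σ (Icc 0 ε)) (hε : 0 < ε) (hε1 : ε ≤ 1) (hδ : Continuous δ)
    (hγ : ∀ x, IsStickLoop ε σ (γ x)) (hr : ∀ x, IsReparamAt (s x) (γ x) (δ x)) :
    Continuous s := by
  have hemb : IsEmbedding ((Icc 0 ε).domRestrict σ) :=
    (hσc.domRestrict.isClosedEmbedding hσi.injective).isEmbedding
  let v : X → Icc 0 ε := fun x => ⟨s x * ε, unitInterval.mul_mem_Icc (s x) hε.le⟩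
  have hv : Continuous v := by
    refine hemb.continuous_iff.2 ?_
    have : (Icc 0 ε).domRestrict σ ∘ v = fun x => IccExtend zero_le_one (δ x) (ε / 2) :=
      funext fun x => ((hr x).IccExtend_half (hγ x) hε hε1).symm
    rw [this]
    exact (continuous_eval_const _).comp hδ
  refine IsInducing.subtypeVal.continuous_iff.2 ?_
  have : Subtype.val ∘ s = fun x => (v x : ℝ) / ε :=
    funext fun x => (mul_div_cancel_right₀ _ hε.ne').symm
  rw [this]
  exact (continuous_subtype_val.comp hv).div_const ε

lemma continuous_loop_of_isReparamAt (hσc : ContinuousOn σ (Icc 0 ε)) (hε : 0 < ε)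
    (hδ : Continuous δ) (hs : Continuous s) (hγ : ∀ x, IsStickLoop ε σ (γ x))
    (hr : ∀ x, IsReparamAt (s x) (γ x) (δ x)) : Continuous γ := by
  refine ContinuousMap.continuous_of_continuous_uncurry _ (continuousOn_univ.1 ?_)
  have hcover : (univ : Set (X × unitInterval)) = {q | (q.2 : ℝ) ≤ ε} ∪
      {q | (q.2 : ℝ) ∈ Icc ε (1 - ε)} ∪ {q | 1 - ε ≤ (q.2 : ℝ)} := by
    refine (eq_univ_of_forall fun q => ?_).symm
    simp only [mem_union, mem_ofPred_eq, mem_Icc]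
    by_contra! h
    linarith [h.1.1, h.1.2 h.1.1.le, h.2]
  have hc : Continuous fun q : X × unitInterval => (q.2 : ℝ) := by fun_prop
  rw [hcover]
  refine ContinuousOn.union_of_isClosed (ContinuousOn.union_of_isClosed ?_ ?_
    (isClosed_le hc continuous_const) (isClosed_Icc.preimage hc)) ?_
    ((isClosed_le hc continuous_const).union (isClosed_Icc.preimage hc))
    (isClosed_le continuous_const hc)
  · exact (hσc.comp hc.continuousOn fun q hq => ⟨q.2.2.1, hq⟩).congr fun q hq =>
      (hγ q.1 q.2).1 hq
  · have hθ := continuous_reparamInvTime hε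
    have hmid : Continuous fun q : X × unitInterval =>
        IccExtend zero_le_one (δ q.1) (reparamInvTime ε (s q.1) q.2) := by
      fun_prop
    refine hmid.continuousOn.congr fun q hq => ?_
    exact (IccExtend_val _ _ q.2).symm.trans ((hr q.1).IccExtend_reparamInvTime hε hq).symm
  · have hc' : Continuous fun q : X × unitInterval => 1 - (q.2 : ℝ) := continuous_const.sub hc
    exact (hσc.comp hc'.continuousOn fun q (hq : 1 - ε ≤ (q.2 : ℝ)) =>
      ⟨by linarith [q.2.2.2], by linarith⟩).congr
      fun q hq => (hγ q.1 q.2).2 hq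

end Continuity

end Reparametrization

lemma Continuous.isEmbedding_of_continuous_rangeSplitting {X Y : Type*} [TopologicalSpace X]
    [TopologicalSpace Y] {f : X → Y} (hf : Continuous f) (hinj : Injective f)
    (h : Continuous (rangeSplitting f)) : IsEmbedding f :=
  IsEmbedding.subtypeVal.comp <|
    Function.LeftInverse.isEmbedding (rightInverse_rangeSplitting hinj) h hf.rangeFactorization

theorem reparametrization_embedding_on_stick_loops
    {M : Type*} [TopologicalSpace M] [T2Space M]
    (x₀ : M) (ε : ℝ) (hε0 : 0 < ε) (hε : ε < 1/6)
    (σ : ℝ → M) (hσcont : ContinuousOn σ (Icc 0 ε)) (hσinj : InjOn σ (Icc 0 ε))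
    (r : C(unitInterval × OmegaLoop M x₀, OmegaLoop M x₀))
    (hr : ∀ (s : unitInterval) (γ : OmegaLoop M x₀) (t : unitInterval),
      ((t : ℝ) ≤ 1/2 →
        (r (s, γ)).1 t = γ.1 (projIcc 0 1 zero_le_one (2 * (s : ℝ) * (t : ℝ)))) ∧
      (1/2 ≤ (t : ℝ) →
        (r (s, γ)).1 t =
          γ.1 (projIcc 0 1 zero_le_one (2 * (1 - (s : ℝ)) * (t : ℝ) - 1 + 2 * (s : ℝ))))) :
    Function.Injective
        (fun p : unitInterval × StickOmegaLoop M x₀ ε σ => r (p.1, p.2.1)) ∧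
      Topology.IsEmbedding
        (fun p : unitInterval × StickOmegaLoop M x₀ ε σ => r (p.1, p.2.1)) := by
  set F := fun p : unitInterval × StickOmegaLoop M x₀ ε σ => r (p.1, p.2.1)
  have hε1 : ε ≤ 1 := by linarith
  have hF : ∀ p, IsReparamAt p.1 p.2.1.1 (F p).1 := fun p => hr p.1 p.2.1
  have hinj : Injective F := fun p q hpq => by
    obtain ⟨hs, hγ⟩ := (hF p).eq_of_isStickLoop hσinj hε0 hε1 p.2.2 q.2.2 (hpq ▸ hF q)
    exact Prod.ext hs (Subtype.ext (Subtype.ext hγ))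
  have hsplit : ∀ δ, IsReparamAt (rangeSplitting F δ).1 (rangeSplitting F δ).2.1.1 δ.1.1 :=
    fun δ => apply_rangeSplitting F δ ▸ hF (rangeSplitting F δ)
  have hδ : Continuous fun δ : range F => δ.1.1 := by fun_prop
  have hstick : ∀ δ, IsStickLoop ε σ (rangeSplitting F δ).2.1.1 := fun δ => (rangeSplitting F δ).2.2
  have hs := continuous_param_of_isReparamAt hσcont hσinj hε0 hε1 hδ hstick hsplit
  have hγ := continuous_loop_of_isReparamAt hσcont hε0 hδ hs hstick hsplit
  have hF_cont : Continuous F := by fun_prop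
  exact ⟨hinj, hF_cont.isEmbedding_of_continuous_rangeSplitting hinj (hs.prodMk
    ((IsEmbedding.subtypeVal.comp IsEmbedding.subtypeVal).continuous_iff.2 hγ))⟩
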